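/- arXiv:1204.2010 — 2 statements merged into one kernel-verified Lean document; each statement's English description precedes it below -/
import Mathlib

section
/- Let f : [a,b] → ℝ be differentiable on an open interval containing [a,b] with a < b, and suppose |f'| is convex on [a,b]. Then |f((a+b)/2) - (1/(b-a)) ∫_a^b f(u) du| ≤ ((b-a)/8)(|f'(a)| + |f'(b)|). -/
/-!
Integrating by parts against the Peano kernel `K(t) = t - a` on `[a, m]`, `K(t) = t - b` on
`[m, b]` (`m` the midpoint) gives `(b - a) f(m) - ∫ f = ∫ K f'` (Montgomery's identity).
Convexity of `|f'|` bounds it by the chord `L` through `(a, |f'(a)|)` and `(b, |f'(b)|)`, so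
`|(b - a) f(m) - ∫ f| ≤ ∫ |K| L`. Since `|K|` is symmetric about `m` and
`L(t) + L(a + b - t) = |f'(a)| + |f'(b)|`, this integral equals
`(|f'(a)| + |f'(b)|) ∫ₐᵐ (t - a) dt = (b - a)² (|f'(a)| + |f'(b)|) / 8`.
-/

open MeasureTheory intervalIntegral Set

lemma le_chord_of_le_on_segment {g : ℝ → ℝ} {a b x : ℝ} (hab : a < b) (hx : x ∈ Icc a b)
    (hg : ∀ t ∈ Icc (0 : ℝ) 1, g (t * a + (1 - t) * b) ≤ t * g a + (1 - t) * g b) :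
    g x ≤ ((b - x) * g a + (x - a) * g b) / (b - a) := by
  have hba : 0 < b - a := sub_pos.mpr hab
  have ht : (b - x) / (b - a) ∈ Icc (0 : ℝ) 1 :=
    ⟨div_nonneg (by linarith [hx.2]) hba.le, (div_le_one hba).mpr (by linarith [hx.1])⟩
  have hpoint : (b - x) / (b - a) * a + (1 - (b - x) / (b - a)) * b = x := by
    field_simp; ring
  calc g x ≤ (b - x) / (b - a) * g a + (1 - (b - x) / (b - a)) * g b := by
        simpa only [hpoint] using hg _ ht
    _ = ((b - x) * g a + (x - a) * g b) / (b - a) := by field_simp; ring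

lemma intervalIntegrable_of_hasDerivAt_of_abs_le {f f' g : ℝ → ℝ} {a b : ℝ} (hab : a ≤ b)
    (hf : ∀ x ∈ Icc a b, HasDerivAt f (f' x) x) (hg : IntervalIntegrable g volume a b)
    (hle : ∀ x ∈ Icc a b, |f' x| ≤ g x) : IntervalIntegrable f' volume a b := by
  rw [intervalIntegrable_iff_integrableOn_Icc_of_le hab] at hg ⊢
  have hderiv : EqOn (deriv f) f' (Icc a b) := fun x hx => (hf x hx).deriv
  refine IntegrableOn.congr_fun ?_ hderiv measurableSet_Icc
  refine hg.mono' (aestronglyMeasurable_deriv f _) ?_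
  filter_upwards [ae_restrict_mem measurableSet_Icc] with x hx
  rw [Real.norm_eq_abs, hderiv hx]
  exact hle x hx

theorem montgomery_identity {f f' : ℝ → ℝ} {a b x : ℝ} (hx : x ∈ Icc a b)
    (hf : ∀ t ∈ Icc a b, HasDerivAt f (f' t) t) (hf' : IntervalIntegrable f' volume a b) :
    (∫ t in a..x, (t - a) * f' t) + ∫ t in x..b, (t - b) * f' t =
      (b - a) * f x - ∫ t in a..b, f t := by
  have huIcc : uIcc a b = Icc a b := uIcc_of_le (hx.1.trans hx.2)
  have hax : uIcc a x ⊆ Icc a b := by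
    rw [uIcc_of_le hx.1]; exact Icc_subset_Icc_right hx.2
  have hxb : uIcc x b ⊆ Icc a b := by
    rw [uIcc_of_le hx.2]; exact Icc_subset_Icc_left hx.1
  have hfi : IntervalIntegrable f volume a b :=
    ContinuousOn.intervalIntegrable fun t ht =>
      (hf t (huIcc ▸ ht)).continuousAt.continuousWithinAt
  have hleft := integral_mul_deriv_eq_deriv_mul (u := fun t => t - a) (u' := fun _ => 1)
    (fun t _ => (hasDerivAt_id t).sub_const a) (fun t ht => hf t (hax ht))
    intervalIntegrable_const (hf'.mono_set (huIcc ▸ hax))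
  have hright := integral_mul_deriv_eq_deriv_mul (u := fun t => t - b) (u' := fun _ => 1)
    (fun t _ => (hasDerivAt_id t).sub_const b) (fun t ht => hf t (hxb ht))
    intervalIntegrable_const (hf'.mono_set (huIcc ▸ hxb))
  rw [hleft, hright, ← integral_add_adjacent_intervals (hfi.mono_set (huIcc ▸ hax))
    (hfi.mono_set (huIcc ▸ hxb))]
  simp only [one_mul, sub_self, zero_mul]
  ring

lemma abs_integral_kernel_mul_le_integral_tent_mul {g L : ℝ → ℝ} (hL : Continuous L)
    {a b : ℝ} (hab : a ≤ b) (hgL : ∀ x ∈ Icc a b, |g x| ≤ L x) :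
    |(∫ t in a..(a + b) / 2, (t - a) * g t) + ∫ t in (a + b) / 2..b, (t - b) * g t| ≤
      (∫ t in a..(a + b) / 2, (t - a) * L t) + ∫ t in (a + b) / 2..b, (b - t) * L t := by
  refine (abs_add_le _ _).trans (add_le_add ?_ ?_) <;> rw [← Real.norm_eq_abs]
  · have ham : a ≤ (a + b) / 2 := by linarith
    refine norm_integral_le_of_norm_le ham (ae_of_all _ fun t ht => ?_)
      ((by fun_prop : Continuous fun t => (t - a) * L t).intervalIntegrable _ _)
    rw [Real.norm_eq_abs, abs_mul, abs_of_nonneg (by linarith [ht.1])]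
    exact mul_le_mul_of_nonneg_left (hgL t ⟨ht.1.le, by linarith [ht.2]⟩) (by linarith [ht.1])
  · have hmb : (a + b) / 2 ≤ b := by linarith
    refine norm_integral_le_of_norm_le hmb (ae_of_all _ fun t ht => ?_)
      ((by fun_prop : Continuous fun t => (b - t) * L t).intervalIntegrable _ _)
    rw [Real.norm_eq_abs, abs_mul, abs_sub_comm, abs_of_nonneg (by linarith [ht.2])]
    exact mul_le_mul_of_nonneg_left (hgL t ⟨by linarith [ht.1], ht.2⟩) (by linarith [ht.2])

lemma integral_tent_mul_of_add_reflect_eq {L : ℝ → ℝ} (hL : Continuous L) {a b S : ℝ}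
    (hsymm : ∀ t, L t + L (a + b - t) = S) :
    (∫ t in a..(a + b) / 2, (t - a) * L t) + ∫ t in (a + b) / 2..b, (b - t) * L t =
      (b - a) ^ 2 * S / 8 := by
  have hreflect : ∫ t in (a + b) / 2..b, (b - t) * L t =
      ∫ t in a..(a + b) / 2, (t - a) * L (a + b - t) := by
    have h := integral_comp_sub_left (fun t => (b - t) * L t) (a + b) (a := a) (b := (a + b) / 2)
    rw [show a + b - (a + b) / 2 = (a + b) / 2 by ring, add_sub_cancel_left] at h
    rw [← h]
    congr 1 with t
    ring
  rw [hreflect, ← integral_add (Continuous.intervalIntegrable (by fun_prop) _ _)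
    (Continuous.intervalIntegrable (by fun_prop) _ _)]
  simp_rw [← mul_add, hsymm]
  rw [intervalIntegral.integral_mul_const, integral_comp_sub_right (fun t => t), integral_id]
  ring

theorem midpoint_abs_deriv_convex
    (a b c d : ℝ) (f f' : ℝ → ℝ) (hab : a < b)
    (hsub : Icc a b ⊆ Ioo c d)
    (hf : ∀ x ∈ Ioo c d, HasDerivAt f (f' x) x)
    (hconv : ∀ x ∈ Icc a b, ∀ y ∈ Icc a b, ∀ t ∈ Icc (0:ℝ) 1,
      |f' (t * x + (1 - t) * y)| ≤ t * |f' x| + (1 - t) * |f' y|) :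
    |f ((a + b) / 2) - (1 / (b - a)) * ∫ u in a..b, f u| ≤
      ((b - a) / 8) * (|f' a| + |f' b|) := by
  have hba : 0 < b - a := sub_pos.mpr hab
  have hderiv : ∀ x ∈ Icc a b, HasDerivAt f (f' x) x := fun x hx => hf x (hsub hx)
  set L : ℝ → ℝ := fun x => ((b - x) * |f' a| + (x - a) * |f' b|) / (b - a)
  have hL : Continuous L := by fun_prop
  have hbound : ∀ x ∈ Icc a b, |f' x| ≤ L x := fun x hx =>
    le_chord_of_le_on_segment (g := fun x => |f' x|) hab hx
      (hconv a (left_mem_Icc.mpr hab.le) b (right_mem_Icc.mpr hab.le))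
  have hsymm : ∀ t, L t + L (a + b - t) = |f' a| + |f' b| := fun t => by
    simp only [L]; field_simp; ring
  have hmid : (a + b) / 2 ∈ Icc a b := ⟨by linarith, by linarith⟩
  have hid := montgomery_identity hmid hderiv
    (intervalIntegrable_of_hasDerivAt_of_abs_le hab.le hderiv (hL.intervalIntegrable _ _) hbound)
  calc |f ((a + b) / 2) - (1 / (b - a)) * ∫ u in a..b, f u|
      = |((b - a) * f ((a + b) / 2) - ∫ u in a..b, f u) / (b - a)| := by congr 1; field_simp
    _ = |(b - a) * f ((a + b) / 2) - ∫ u in a..b, f u| / (b - a) := by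
        rw [abs_div, abs_of_pos hba]
    _ ≤ ((∫ t in a..(a + b) / 2, (t - a) * L t) + ∫ t in (a + b) / 2..b, (b - t) * L t) /
        (b - a) := by
        rw [← hid]
        gcongr
        exact abs_integral_kernel_mul_le_integral_tent_mul hL hab.le hbound
    _ = ((b - a) / 8) * (|f' a| + |f' b|) := by
        rw [integral_tent_mul_of_add_reflect_eq hL hsymm]; field_simp
end

section
/- Let f be differentiable on an open interval containing [a,b] with a < b, q > 1 with 1/p + 1/q = 1, and |f'|^q convex on [a,b]. Then |f((a+b)/2) - (1/(b-a)) ∫_a^b f(u) du| ≤ ((b-a)/4)(4/(p+1))^{1/p} (|f'(a)| + |f'(b)|). -/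
/-!
Integrating by parts on the two halves of `[a, b]`, with `m = (a + b) / 2`,
`(b - a) f(m) - ∫_a^b f = ∫_a^m (x - a) f'(x) dx + ∫_m^b (x - b) f'(x) dx`.
Convexity of `|f'|^q` together with the subadditivity of `t ↦ t^(1/q)` gives the pointwise bound
`|f' u| ≤ ((b - u)/(b - a))^(1/q) |f' a| + ((u - a)/(b - a))^(1/q) |f' b|`, and integrating it
against the two kernels bounds the left side by `(b - a)(1/8 + (1/2)^(2+1/q)/(2+1/q))` times
`|f' a| + |f' b|`. An elementary estimate (Bernoulli's inequality and `log x ≥ 1 - 1/x`) shows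
that this constant is at most `(1/4)(4/(p+1))^(1/p)`.
-/

open MeasureTheory intervalIntegral Set

lemma le_of_rpow_le_mul_rpow_add_mul_rpow {q v x y α β : ℝ} (hq : 1 ≤ q) (hv : 0 ≤ v)
    (hx : 0 ≤ x) (hy : 0 ≤ y) (hα : 0 ≤ α) (hβ : 0 ≤ β)
    (h : v ^ q ≤ α * x ^ q + β * y ^ q) :
    v ≤ α ^ (1 / q) * x + β ^ (1 / q) * y := by
  have hq0 : 0 < q := zero_lt_one.trans_le hq
  have root : ∀ z : ℝ, 0 ≤ z → (z ^ q) ^ (1 / q) = z := fun z hz =>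
    by rw [one_div]; exact Real.rpow_rpow_inv hz hq0.ne'
  calc v = (v ^ q) ^ (1 / q) := (root v hv).symm
    _ ≤ (α * x ^ q + β * y ^ q) ^ (1 / q) := by gcongr
    _ ≤ (α * x ^ q) ^ (1 / q) + (β * y ^ q) ^ (1 / q) :=
      Real.rpow_add_le_add_rpow (by positivity) (by positivity) (by positivity)
        (div_le_one_of_le₀ hq hq0.le)
    _ = α ^ (1 / q) * x + β ^ (1 / q) * y := by
      rw [Real.mul_rpow hα (by positivity), Real.mul_rpow hβ (by positivity), root x hx,
        root y hy]

lemma abs_le_of_abs_rpow_convex {g : ℝ → ℝ} {a b q u : ℝ} (hab : a < b) (hq : 1 ≤ q)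
    (hconv : ∀ t ∈ Icc (0:ℝ) 1,
      |g (t * a + (1 - t) * b)| ^ q ≤ t * |g a| ^ q + (1 - t) * |g b| ^ q)
    (hu : u ∈ Icc a b) :
    |g u| ≤ ((b - u) / (b - a)) ^ (1 / q) * |g a| + ((u - a) / (b - a)) ^ (1 / q) * |g b| := by
  have hL : 0 < b - a := sub_pos.2 hab
  have h1t : 1 - (b - u) / (b - a) = (u - a) / (b - a) := by field_simp; ring
  have hu' : (b - u) / (b - a) * a + (1 - (b - u) / (b - a)) * b = u := by
    rw [h1t]; field_simp; ring
  have ht : (b - u) / (b - a) ∈ Icc (0:ℝ) 1 :=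
    ⟨div_nonneg (by linarith [hu.2]) hL.le, div_le_one_of_le₀ (by linarith [hu.1]) hL.le⟩
  have h := hconv _ ht
  rw [hu', h1t] at h
  exact le_of_rpow_le_mul_rpow_add_mul_rpow hq (abs_nonneg _) (abs_nonneg _) (abs_nonneg _)
    ht.1 (div_nonneg (by linarith [hu.1]) hL.le) h

lemma intervalIntegrable_of_hasDerivAt_of_norm_le {E : Type*} [NormedAddCommGroup E]
    [NormedSpace ℝ E] [CompleteSpace E] {f f' : ℝ → E} {a b C : ℝ}
    (hf : ∀ x ∈ uIcc a b, HasDerivAt f (f' x) x) (hC : ∀ x ∈ uIcc a b, ‖f' x‖ ≤ C) :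
    IntervalIntegrable f' volume a b := by
  have hsub : uIoc a b ⊆ uIcc a b := uIoc_subset_uIcc
  have hderiv : EqOn (deriv f) f' (uIoc a b) := fun x hx => (hf x (hsub hx)).deriv
  refine intervalIntegrable_const (c := C) |>.mono_fun' ?_ ?_
  · exact (aestronglyMeasurable_deriv f _).congr
      ((ae_restrict_iff' measurableSet_uIoc).2 (.of_forall hderiv))
  · exact (ae_restrict_iff' measurableSet_uIoc).2 (.of_forall fun x hx => hC x (hsub hx))

lemma integral_sub_mul_deriv_eq {f f' : ℝ → ℝ} {u v w : ℝ}
    (hf : ∀ x ∈ uIcc u v, HasDerivAt f (f' x) x) (hf' : IntervalIntegrable f' volume u v) :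
    ∫ x in u..v, (x - w) * f' x = (v - w) * f v - (u - w) * f u - ∫ x in u..v, f x := by
  simpa using integral_mul_deriv_eq_deriv_mul (u' := fun _ => 1)
    (fun x _ => (hasDerivAt_id x).sub_const w) hf intervalIntegrable_const hf'

lemma mul_apply_midpoint_sub_integral_eq {f f' : ℝ → ℝ} {a b : ℝ}
    (hf : ∀ x ∈ uIcc a b, HasDerivAt f (f' x) x) (hf' : IntervalIntegrable f' volume a b) :
    (b - a) * f ((a + b) / 2) - ∫ x in a..b, f x =
      (∫ x in a..(a + b) / 2, (x - a) * f' x) + ∫ x in (a + b) / 2..b, (x - b) * f' x := by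
  have hm : (a + b) / 2 ∈ uIcc a b := by
    rcases le_total a b with h | h
    · exact Icc_subset_uIcc ⟨by linarith, by linarith⟩
    · exact Icc_subset_uIcc' ⟨by linarith, by linarith⟩
  have hleft := uIcc_subset_uIcc_left hm
  have hright := uIcc_subset_uIcc_right hm
  have hfc : ContinuousOn f (uIcc a b) := fun x hx => (hf x hx).continuousAt.continuousWithinAt
  rw [integral_sub_mul_deriv_eq (fun x hx => hf x (hleft hx)) (hf'.mono_set hleft),
    integral_sub_mul_deriv_eq (fun x hx => hf x (hright hx)) (hf'.mono_set hright),
    ← integral_add_adjacent_intervals ((hfc.mono hleft).intervalIntegrable)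
      ((hfc.mono hright).intervalIntegrable)]
  ring

lemma abs_integral_mul_le_of_abs_le {g : ℝ → ℝ} {h s A B : ℝ} (hh : 0 ≤ h) (hs : 0 ≤ s)
    (hg : ∀ x ∈ Icc 0 h, |g x| ≤ A + B * x ^ s) :
    |∫ x in (0)..h, x * g x| ≤ A * (h ^ 2 / 2) + B * (h ^ (2 + s) / (2 + s)) := by
  have hbound : ∀ x ∈ Ioc 0 h, ‖x * g x‖ ≤ A * x + B * x ^ (1 + s) := by
    intro x hx
    rw [Real.norm_eq_abs, abs_mul, abs_of_pos hx.1, Real.rpow_one_add' hx.1.le (by linarith)]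
    nlinarith [hg x (Ioc_subset_Icc_self hx), hx.1]
  have hcont : Continuous fun x : ℝ => x ^ (1 + s) :=
    continuous_id.rpow_const fun _ => Or.inr (by linarith)
  calc |∫ x in (0)..h, x * g x|
      ≤ ∫ x in (0)..h, (A * x + B * x ^ (1 + s)) :=
        intervalIntegral.norm_integral_le_of_norm_le hh (.of_forall hbound)
          (((continuous_const_mul A).add (hcont.const_mul B)).intervalIntegrable _ _)
    _ = A * (h ^ 2 / 2) + B * (h ^ (2 + s) / (2 + s)) := by
      rw [intervalIntegral.integral_add (intervalIntegrable_id.const_mul A)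
          ((hcont.intervalIntegrable _ _).const_mul B),
        intervalIntegral.integral_const_mul, intervalIntegral.integral_const_mul, integral_id,
        integral_rpow (Or.inl (by linarith)), show 1 + s + 1 = 2 + s by ring,
        Real.zero_rpow (by linarith)]
      ring

lemma rpow_div_le_one_of_mem_Icc {x L s : ℝ} (hx : x ∈ Icc 0 L) (hs : 0 ≤ s) :
    (x / L) ^ s ≤ 1 :=
  have hL : 0 ≤ L := hx.1.trans hx.2
  Real.rpow_le_one (div_nonneg hx.1 hL) (div_le_one_of_le₀ hx.2 hL) hs

lemma abs_integral_sub_left_mul_le {f' : ℝ → ℝ} {a b s X Y : ℝ} (hab : a < b) (hs : 0 ≤ s)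
    (hX : 0 ≤ X) (hbound : ∀ u ∈ Icc a b,
      |f' u| ≤ ((b - u) / (b - a)) ^ s * X + ((u - a) / (b - a)) ^ s * Y) :
    |∫ x in a..(a + b) / 2, (x - a) * f' x| ≤
      X * (((b - a) / 2) ^ 2 / 2) + Y / (b - a) ^ s * (((b - a) / 2) ^ (2 + s) / (2 + s)) := by
  have hL : 0 < b - a := sub_pos.2 hab
  have hshift : ∫ x in (0)..(b - a) / 2, x * f' (x + a) =
      ∫ x in a..(a + b) / 2, (x - a) * f' x := by
    rw [show (a + b) / 2 = (b - a) / 2 + a by ring]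
    simpa using intervalIntegral.integral_comp_add_right (a := 0) (b := (b - a) / 2)
      (fun x => (x - a) * f' x) a
  rw [← hshift]
  refine abs_integral_mul_le_of_abs_le (by positivity) hs fun x hx => ?_
  have hx' : x + a ∈ Icc a b := ⟨by linarith [hx.1], by linarith [hx.2]⟩
  have hw := rpow_div_le_one_of_mem_Icc (L := b - a) (x := b - (x + a))
    ⟨by linarith [hx'.2], by linarith [hx'.1]⟩ hs
  have h := hbound _ hx'
  rw [add_sub_cancel_right, Real.div_rpow hx.1 hL.le, div_mul_comm] at h
  nlinarith [mul_le_mul_of_nonneg_right hw hX]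

lemma abs_integral_sub_right_mul_le {f' : ℝ → ℝ} {a b s X Y : ℝ} (hab : a < b)
    (hs : 0 ≤ s) (hY : 0 ≤ Y) (hbound : ∀ u ∈ Icc a b,
      |f' u| ≤ ((b - u) / (b - a)) ^ s * X + ((u - a) / (b - a)) ^ s * Y) :
    |∫ x in (a + b) / 2..b, (x - b) * f' x| ≤
      Y * (((b - a) / 2) ^ 2 / 2) + X / (b - a) ^ s * (((b - a) / 2) ^ (2 + s) / (2 + s)) := by
  have hreflect : ∫ x in a..(a + b) / 2, (x - a) * f' (a + b - x) =
      -∫ x in (a + b) / 2..b, (x - b) * f' x := by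
    have h := intervalIntegral.integral_comp_sub_left (a := a) (b := (a + b) / 2)
      (fun x => -((x - b) * f' x)) (a + b)
    rw [show a + b - (a + b) / 2 = (a + b) / 2 by ring, add_sub_cancel_left] at h
    rw [← intervalIntegral.integral_neg, ← h]
    congr 1; ext x; ring
  have h := abs_integral_sub_left_mul_le (f' := fun u => f' (a + b - u)) (X := Y) (Y := X)
    hab hs hY fun u hu => by
      have h := hbound (a + b - u) ⟨by linarith [hu.2], by linarith [hu.1]⟩
      rw [show b - (a + b - u) = u - a by ring, show a + b - u - a = b - u by ring] at h
      linarith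
  rwa [hreflect, abs_neg] at h

lemma abs_midpoint_sub_average_le {f f' : ℝ → ℝ} {a b s X Y : ℝ} (hab : a < b)
    (hs : 0 ≤ s) (hX : 0 ≤ X) (hY : 0 ≤ Y) (hf : ∀ x ∈ Icc a b, HasDerivAt f (f' x) x)
    (hbound : ∀ u ∈ Icc a b,
      |f' u| ≤ ((b - u) / (b - a)) ^ s * X + ((u - a) / (b - a)) ^ s * Y) :
    |f ((a + b) / 2) - 1 / (b - a) * ∫ u in a..b, f u| ≤
      (b - a) * (1 / 8 + (1 / 2) ^ (2 + s) / (2 + s)) * (X + Y) := by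
  have hL : 0 < b - a := sub_pos.2 hab
  have hIcc : uIcc a b = Icc a b := uIcc_of_le hab.le
  have hf' : IntervalIntegrable f' volume a b := by
    refine intervalIntegrable_of_hasDerivAt_of_norm_le (C := X + Y) (hIcc ▸ hf) fun u hu => ?_
    rw [hIcc] at hu
    have h1 := rpow_div_le_one_of_mem_Icc (L := b - a) (x := b - u)
      ⟨by linarith [hu.2], by linarith [hu.1]⟩ hs
    have h2 := rpow_div_le_one_of_mem_Icc (L := b - a) (x := u - a)
      ⟨by linarith [hu.1], by linarith [hu.2]⟩ hs
    rw [Real.norm_eq_abs]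
    nlinarith [hbound u hu]
  have hhalf : ((b - a) / 2) ^ (2 + s) = (b - a) ^ 2 * (b - a) ^ s * (1 / 2) ^ (2 + s) := by
    rw [div_eq_mul_one_div (b - a) 2, Real.mul_rpow hL.le (by norm_num), Real.rpow_add hL,
      Real.rpow_two]
  calc |f ((a + b) / 2) - 1 / (b - a) * ∫ u in a..b, f u|
      = |(b - a) * f ((a + b) / 2) - ∫ u in a..b, f u| / (b - a) := by
        rw [← abs_of_pos hL, ← abs_div, abs_of_pos hL]; congr 1; field_simp
    _ ≤ (|∫ x in a..(a + b) / 2, (x - a) * f' x| + |∫ x in (a + b) / 2..b, (x - b) * f' x|) /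
          (b - a) := by
        rw [mul_apply_midpoint_sub_integral_eq (hIcc ▸ hf) hf']
        gcongr
        exact abs_add_le _ _
    _ ≤ _ := by
        rw [div_le_iff₀ hL]
        refine (add_le_add (abs_integral_sub_left_mul_le hab hs hX hbound)
          (abs_integral_sub_right_mul_le hab hs hY hbound)).trans (le_of_eq ?_)
        rw [hhalf]; field_simp; ring

lemma one_add_mul_one_sub_inv_le_rpow {B r : ℝ} (hB : 0 < B) (hr : 0 ≤ r) :
    1 + r * (1 - B⁻¹) ≤ B ^ r := by
  have hlog := mul_le_mul_of_nonneg_left (Real.one_sub_inv_le_log_of_pos hB) hr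
  rw [Real.rpow_def_of_pos hB]
  linarith [Real.add_one_le_exp (Real.log B * r)]

lemma kirmaci_constant_le {p : ℝ} (hp : 1 ≤ p) :
    1 / 8 + (1 / 2 : ℝ) ^ (3 - 1 / p) / (3 - 1 / p) ≤ (4 / (p + 1)) ^ (1 / p) / 4 := by
  -- With `r = 1 / p`: `2 ^ r ≤ 1 + r` and `(4 / (p + 1)) ^ r ≥ (3 + 3r) / 4` reduce the claim
  -- to `0 ≤ 1 + 6r - 3r²`.
  set r := 1 / p with hr_def
  have hp0 : 0 < p := zero_lt_one.trans_le hp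
  have hr0 : 0 < r := by positivity
  have hr1 : r ≤ 1 := div_le_one_of_le₀ hp hp0.le
  have hrp : r * p = 1 := by rw [hr_def]; field_simp
  have hhalf : (1 / 2 : ℝ) ^ (3 - r) = 2 ^ r / 8 := by
    rw [one_div, Real.inv_rpow zero_le_two, Real.rpow_sub zero_lt_two]
    norm_num
  have hbernoulli : (2 : ℝ) ^ r ≤ 1 + r := by
    simpa [one_add_one_eq_two] using rpow_one_add_le_one_add_mul_self (s := 1) (by norm_num)
      hr0.le hr1
  have hlower : 1 + r * (1 - (4 / (p + 1))⁻¹) = (3 + 3 * r) / 4 := by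
    rw [inv_div]; linear_combination (-1 / 4 : ℝ) * hrp
  have hbase := one_add_mul_one_sub_inv_le_rpow (B := 4 / (p + 1)) (by positivity) hr0.le
  rw [hlower] at hbase
  have hr3 : 0 < 8 * (3 - r) := by linarith
  have hquot : (1 + r) / (8 * (3 - r)) ≤ (1 + 3 * r) / 16 := by
    rw [div_le_div_iff₀ hr3 (by norm_num)]; nlinarith
  rw [hhalf, div_div]
  linarith [div_le_div_of_nonneg_right hbernoulli hr3.le]

theorem kirmaci_holder_simplified
    (a b c d p q : ℝ) (f f' : ℝ → ℝ) (hab : a < b)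
    (hsub : Icc a b ⊆ Ioo c d)
    (hf : ∀ x ∈ Ioo c d, HasDerivAt f (f' x) x)
    (hq : 1 < q) (hpq : 1 / p + 1 / q = 1)
    (hconv : ∀ x ∈ Icc a b, ∀ y ∈ Icc a b, ∀ t ∈ Icc (0:ℝ) 1,
      |f' (t * x + (1 - t) * y)| ^ q ≤ t * |f' x| ^ q + (1 - t) * |f' y| ^ q) :
    |f ((a + b) / 2) - (1 / (b - a)) * ∫ u in a..b, f u| ≤
      ((b - a) / 4) * (4 / (p + 1)) ^ (1 / p) * (|f' a| + |f' b|) := by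
  have hq0 : 0 < q := zero_lt_one.trans hq
  have hq_inv : 0 < 1 / q ∧ 1 / q < 1 := ⟨one_div_pos.2 hq0, (div_lt_one hq0).2 hq⟩
  have hp0 : 0 < p := one_div_pos.1 (by linarith [hq_inv.2])
  have hp : 1 ≤ p := ((div_lt_one hp0).1 (by linarith [hq_inv.1])).le
  have hmid := abs_midpoint_sub_average_le hab hq_inv.1.le (abs_nonneg (f' a))
    (abs_nonneg (f' b)) (fun x hx => hf x (hsub hx)) fun u hu =>
      abs_le_of_abs_rpow_convex hab hq.le (hconv a (left_mem_Icc.2 hab.le) b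
        (right_mem_Icc.2 hab.le)) hu
  rw [show 2 + 1 / q = 3 - 1 / p by linarith] at hmid
  calc _ ≤ _ := hmid
    _ ≤ (b - a) * ((4 / (p + 1)) ^ (1 / p) / 4) * (|f' a| + |f' b|) := by
      gcongr
      exact kirmaci_constant_le hp
    _ = _ := by ring
end
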